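/- Let C ⊆ ℝⁿ be a nonempty convex set and F ∈ C¹(C; ℝⁿ) such that the Jacobian matrix F'(x) is positive definite (or negative definite) at every point x ∈ C. Then F is injective on C. -/

import Mathlib

/-!
Along the segment from `x` to `y ≠ x` in `C`, the function `t ↦ ⟪F (x + t • (y - x)), y - x⟫` has
derivative `⟪F' (x + t • (y - x)) (y - x), y - x⟫ > 0`, so it is strictly increasing on `[0, 1]`.
Hence `⟪F y - F x, y - x⟫ > 0`, and in particular `F y ≠ F x`. The negative definite case is the
positive definite one for `-F`.
-/

open Set

variable {E : Type*} [NormedAddCommGroup E] [InnerProductSpace ℝ E]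

theorem Convex.inner_sub_sub_pos_of_hasFDerivWithinAt {C : Set E} (hC : Convex ℝ C)
    {F : E → E} {F' : E → E →L[ℝ] E} (hderiv : ∀ x ∈ C, HasFDerivWithinAt F (F' x) C x)
    (hpos : ∀ x ∈ C, ∀ c : E, c ≠ 0 → 0 < (inner ℝ (F' x c) c : ℝ))
    {x y : E} (hx : x ∈ C) (hy : y ∈ C) (hxy : x ≠ y) :
    0 < (inner ℝ (F y - F x) (y - x) : ℝ) := by
  set v := y - x
  have hv : v ≠ 0 := sub_ne_zero.mpr hxy.symm
  set γ : ℝ → E := fun t => x + t • v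
  have hγC : MapsTo γ (Icc 0 1) C := fun t ht => hC.add_smul_sub_mem hx hy ht
  have hγ : ∀ t, HasDerivAt γ v t := fun t => by
    simpa [γ] using ((hasDerivAt_id t).smul_const v).const_add x
  set φ : ℝ → ℝ := fun t => inner ℝ (F (γ t)) v
  have hφ : ∀ t ∈ Icc (0 : ℝ) 1,
      HasDerivWithinAt φ (inner ℝ (F' (γ t) v) v) (Icc 0 1) t := fun t ht => by
    simpa using ((hderiv (γ t) (hγC ht)).comp_hasDerivWithinAt t (hγ t).hasDerivWithinAt
      hγC).inner ℝ (hasDerivWithinAt_const t _ v)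
  have hmono : StrictMonoOn φ (Icc 0 1) := by
    refine strictMonoOn_of_hasDerivWithinAt_pos (f' := fun t => inner ℝ (F' (γ t) v) v)
      (convex_Icc 0 1) (fun t ht => (hφ t ht).continuousWithinAt) (fun t ht => ?_) (fun t ht => ?_)
    all_goals rw [interior_Icc] at ht
    · rw [interior_Icc]
      exact (hφ t (Ioo_subset_Icc_self ht)).mono Ioo_subset_Icc_self
    · exact hpos (γ t) (hγC (Ioo_subset_Icc_self ht)) v hv
  have h01 : φ 0 < φ 1 := hmono (left_mem_Icc.mpr zero_le_one)
    (right_mem_Icc.mpr zero_le_one) zero_lt_one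
  simpa [φ, γ, v, inner_sub_left] using h01

theorem Convex.injOn_of_inner_fderiv_pos {C : Set E} (hC : Convex ℝ C)
    {F : E → E} {F' : E → E →L[ℝ] E} (hderiv : ∀ x ∈ C, HasFDerivWithinAt F (F' x) C x)
    (hpos : ∀ x ∈ C, ∀ c : E, c ≠ 0 → 0 < (inner ℝ (F' x c) c : ℝ)) :
    InjOn F C := fun x hx y hy hFxy => by
  by_contra hxy
  simpa [hFxy] using hC.inner_sub_sub_pos_of_hasFDerivWithinAt hderiv hpos hx hy hxy

theorem gale_nikaido_general
    {n : ℕ} {C : Set (EuclideanSpace ℝ (Fin n))}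
    (hC : Convex ℝ C)
    (F : EuclideanSpace ℝ (Fin n) → EuclideanSpace ℝ (Fin n))
    (F' : EuclideanSpace ℝ (Fin n) →
      EuclideanSpace ℝ (Fin n) →L[ℝ] EuclideanSpace ℝ (Fin n))
    (hderiv : ∀ x ∈ C, HasFDerivWithinAt F (F' x) C x)
    (hdef : (∀ x ∈ C, ∀ c : EuclideanSpace ℝ (Fin n), c ≠ 0 →
        0 < (inner ℝ (F' x c) c : ℝ)) ∨
      (∀ x ∈ C, ∀ c : EuclideanSpace ℝ (Fin n), c ≠ 0 →
        (inner ℝ (F' x c) c : ℝ) < 0)) :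
    Set.InjOn F C := by
  rcases hdef with hpos | hneg
  · exact hC.injOn_of_inner_fderiv_pos hderiv hpos
  · have hnegF : InjOn (Neg.neg ∘ F) C :=
      hC.injOn_of_inner_fderiv_pos (F' := fun x => -F' x) (fun x hx => (hderiv x hx).neg)
        fun x hx c hc => by simpa [inner_neg_left] using hneg x hx c hc
    exact hnegF.of_comp

/-- Gale–Nikaido theorem: a C¹ map on a convex set whose Jacobian is everywhere
positive definite (or everywhere negative definite) is injective. -/
theorem gale_nikaido
    {n : ℕ} {C : Set (EuclideanSpace ℝ (Fin n))}
    (hC : Convex ℝ C) (hne : C.Nonempty)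
    (F : EuclideanSpace ℝ (Fin n) → EuclideanSpace ℝ (Fin n))
    (F' : EuclideanSpace ℝ (Fin n) →
      EuclideanSpace ℝ (Fin n) →L[ℝ] EuclideanSpace ℝ (Fin n))
    (hderiv : ∀ x ∈ C, HasFDerivWithinAt F (F' x) C x)
    (hcont : ContinuousOn F' C)
    (hdef : (∀ x ∈ C, ∀ c : EuclideanSpace ℝ (Fin n), c ≠ 0 →
        0 < (inner ℝ (F' x c) c : ℝ)) ∨
      (∀ x ∈ C, ∀ c : EuclideanSpace ℝ (Fin n), c ≠ 0 →
        (inner ℝ (F' x c) c : ℝ) < 0)) :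
    Set.InjOn F C :=
  gale_nikaido_general hC F F' hderiv hdef
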